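/- Fix a positive integer k. There exist constants c₀ = c₀(k) > 0 and C₀ = C₀(k) > 0 such that the following holds. Let ε, δ ∈ (0, 1/2) be real, let 1 ≤ L ≤ M be positive integers, let Δ ≥ 1, and let A ⊆ [M, 2M] ∩ ℤ be a nonempty set such that |A ∩ P| ≤ Δ · |A| · |P| / M for every arithmetic progression P ⊆ [M, 2M] ∩ ℤ of length at least L. Suppose ϑ ∈ ℝ satisfies ‖ϑ‖ ≤ ε/(L M^{k−1}), and that at least δ|A| elements m ∈ A satisfy ‖m^k ϑ‖ ≤ ε. Then either ε ≥ c₀ · δ/Δ, or ‖ϑ‖ ≤ C₀ · Δ · δ^{−1} · ε / M^k. -/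
import Mathlib


open scoped BigOperators Classical
open Real Filter MeasureTheory

noncomputable section

/-- `e(t) = exp(2πit)`. -/
def efn (t : ℝ) : ℂ := Complex.exp (2 * Real.pi * Complex.I * t)

/-- `S(x,y)`: positive integers `n ≤ x` all of whose prime factors are `≤ y`. -/
def friableSet (x y : ℝ) : Finset ℕ :=
  (Finset.Icc 1 ⌊x⌋₊).filter fun n => ∀ p : ℕ, p.Prime → p ∣ n → (p : ℝ) ≤ y

/-- `Ψ(x,y) = #S(x,y)`. -/
def Psi (x y : ℝ) : ℕ := (friableSet x y).card

/-- The friable Weyl sum `E_k(x,y;ϑ) = ∑_{n ∈ S(x,y)} e(n^k ϑ)`. -/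
def Ek (k : ℕ) (x y ϑ : ℝ) : ℂ := ∑ n ∈ friableSet x y, efn ((n : ℝ) ^ k * ϑ)

/-- The saddle point condition: `α ∈ (0,1)` and `∑_{p ≤ y} log p/(p^α − 1) = log x`. -/
def IsSaddle (x y α : ℝ) : Prop :=
  0 < α ∧ α < 1 ∧
    ∑ p ∈ (Finset.Icc 2 ⌊y⌋₊).filter Nat.Prime,
      Real.log p / ((p : ℝ) ^ α - 1) = Real.log x

/-- `u_y⁻¹ = min(1/u, log(1+u)/log y)` where `u = log x / log y`. -/
def uyInv (x y : ℝ) : ℝ :=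
  min (Real.log x / Real.log y)⁻¹
    (Real.log (1 + Real.log x / Real.log y) / Real.log y)

/-- `H(u) = exp(u/(log(u+1))²)` with `u = log x / log y`. -/
def Hu (x y : ℝ) : ℝ :=
  Real.exp ((Real.log x / Real.log y) / Real.log (Real.log x / Real.log y + 1) ^ 2)

/-- `Φ̌(λ,s) = s ∫₀¹ e(λ t^k) t^{s−1} dt`. -/
def PhiCheck (k : ℕ) (lam s : ℂ) : ℂ :=
  s * ∫ t in (0:ℝ)..1,
    Complex.exp (2 * Real.pi * Complex.I * lam * (t : ℂ) ^ k) * (t : ℂ) ^ (s - 1)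

/-- The local factor `H_{a/q}(s)`. -/
def Haq (k : ℕ) (y : ℝ) (a q : ℕ) (s : ℂ) : ℂ :=
  ∑ d1 ∈ q.divisors, ∑ d2 ∈ q.divisors,
    if d1 * d2 ∣ q ∧ ∀ p : ℕ, p.Prime → p ∣ d1 * d2 → (p : ℝ) ≤ y then
      (ArithmeticFunction.moebius d2 : ℂ) /
          (((d1 * d2 : ℕ) : ℂ) ^ s * ((q / d1).totient : ℂ)) *
        ∑ b ∈ Finset.range q,
          if Nat.gcd b q = d1 then efn ((a : ℝ) * (b : ℝ) ^ k / (q : ℝ)) else 0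
    else 0

/-- The major arcs `𝔐(Q,X)`. -/
def majorArcs (k : ℕ) (Q X : ℝ) : Set ℝ :=
  {ϑ | ϑ ∈ Set.Icc (0 : ℝ) 1 ∧ ∃ q a : ℕ, 1 ≤ q ∧ (q : ℝ) ≤ Q ∧ a < q ∧
    Nat.gcd a q = 1 ∧ |(q : ℝ) * ϑ - (a : ℝ)| ≤ Q * X ^ (-(k : ℝ))}

/-- Distance from a real number to the nearest integer. -/
def nint (t : ℝ) : ℝ := |t - round t|

end

/-- Auxiliary: if `nint (c * ϑ) ≤ ε` for an integer `c`, then `c * nint ϑ` is within `ε`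
of its nearest integer. -/
theorem aux_nint (c : ℤ) (ϑ ε : ℝ) (h : nint ((c : ℝ) * ϑ) ≤ ε) :
    |(c : ℝ) * nint ϑ - round ((c : ℝ) * nint ϑ)| ≤ ε := by
  have key : ∃ r : ℤ, |(c : ℝ) * nint ϑ - r| ≤ ε := by
    rw [nint] at h
    rcases le_or_gt ((round ϑ : ℤ) : ℝ) ϑ with h1 | h1
    · refine ⟨round ((c : ℝ) * ϑ) - c * round ϑ, ?_⟩
      have hn : nint ϑ = ϑ - round ϑ := by
        rw [nint, abs_of_nonneg (by linarith)]
      rw [hn]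
      have heq : (c : ℝ) * (ϑ - round ϑ) - ((round ((c : ℝ) * ϑ) - c * round ϑ : ℤ) : ℝ)
          = (c : ℝ) * ϑ - round ((c : ℝ) * ϑ) := by push_cast; ring
      rw [heq]; exact h
    · refine ⟨c * round ϑ - round ((c : ℝ) * ϑ), ?_⟩
      have hn : nint ϑ = -(ϑ - round ϑ) := by
        rw [nint, abs_of_neg (by linarith)]
      rw [hn]
      have heq : (c : ℝ) * -(ϑ - round ϑ) - ((c * round ϑ - round ((c : ℝ) * ϑ) : ℤ) : ℝ)
          = -((c : ℝ) * ϑ - round ((c : ℝ) * ϑ)) := by push_cast; ring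
      rw [heq, abs_neg]; exact h
  obtain ⟨r, hr⟩ := key
  exact le_trans (round_le _ r) hr

/-- Auxiliary: `x^n - y^n ≥ (x - y) * n * c^(n-1)` for `0 ≤ c ≤ y ≤ x`. -/
theorem aux_pow_sub_pow (n : ℕ) (c x y : ℝ) (hc : 0 ≤ c) (hcy : c ≤ y) (hyx : y ≤ x) :
    (x - y) * ((n : ℝ) * c ^ (n - 1)) ≤ x ^ n - y ^ n := by
  have h := geom_sum₂_mul x y n
  rw [← h]
  have hsum : (n : ℝ) * c ^ (n - 1) ≤ ∑ i ∈ Finset.range n, x ^ i * y ^ (n - 1 - i) := by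
    calc (n : ℝ) * c ^ (n - 1) = ∑ _i ∈ Finset.range n, c ^ (n - 1) := by
          rw [Finset.sum_const, Finset.card_range, nsmul_eq_mul]
      _ ≤ ∑ i ∈ Finset.range n, x ^ i * y ^ (n - 1 - i) := by
          apply Finset.sum_le_sum
          intro i hi
          rw [Finset.mem_range] at hi
          have hi' : i + (n - 1 - i) = n - 1 := by omega
          calc c ^ (n - 1) = c ^ i * c ^ (n - 1 - i) := by rw [← pow_add, hi']
            _ ≤ x ^ i * y ^ (n - 1 - i) := by
                apply mul_le_mul (pow_le_pow_left₀ hc (hcy.trans hyx) i)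
                  (pow_le_pow_left₀ hc hcy _) (by positivity)
                  (pow_nonneg (hc.trans (hcy.trans hyx)) i)
  have hxy : 0 ≤ x - y := by linarith
  nlinarith [mul_le_mul_of_nonneg_right hsum hxy]

/-- Auxiliary: counting a filter over the coerced copy of `A` in `ℝ`. -/
theorem card_filter_coe (A : Finset ℕ) (p : ℝ → Prop) :
    (Finset.filter p (do let a ← A; pure ((a : ℕ) : ℝ))).card
      = (A.filter (fun m : ℕ => p (m : ℝ))).card := by
  classical
  have h1 : (do let a ← A; pure ((a : ℕ) : ℝ) : Finset ℝ)
      = Finset.image (Nat.cast : ℕ → ℝ) A := by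
    ext x
    simp [Finset.bind_def]
  rw [h1, Finset.filter_image]
  exact Finset.card_image_of_injective _ Nat.cast_injective

set_option maxHeartbeats 1000000 in
/-- a variant of the Vinogradov lemma for sparse host sets. -/
theorem vinogradov_variant (k : ℕ) (hk : 0 < k) :
    ∃ c₀ C₀ : ℝ, 0 < c₀ ∧ 0 < C₀ ∧
      ∀ ε δ : ℝ, ε ∈ Set.Ioo (0 : ℝ) (1 / 2) → δ ∈ Set.Ioo (0 : ℝ) (1 / 2) →
      ∀ L M : ℕ, 1 ≤ L → L ≤ M →
      ∀ Δ : ℝ, 1 ≤ Δ →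
      ∀ A : Finset ℕ, A.Nonempty → A ⊆ Finset.Icc M (2 * M) →
      (∀ a0 d len : ℕ, 1 ≤ d → L ≤ len →
        (Finset.range len).image (fun i => a0 + i * d) ⊆ Finset.Icc M (2 * M) →
        ((A ∩ (Finset.range len).image (fun i => a0 + i * d)).card : ℝ) ≤
          Δ * A.card * ((Finset.range len).image (fun i => a0 + i * d)).card / M) →
      ∀ ϑ : ℝ, nint ϑ ≤ ε / (L * (M : ℝ) ^ (k - 1)) →
      δ * A.card ≤ ((A.filter (fun m => nint ((m : ℝ) ^ k * ϑ) ≤ ε)).card : ℝ) →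
      (c₀ * δ / Δ ≤ ε ∨ nint ϑ ≤ C₀ * Δ * δ⁻¹ * ε / (M : ℝ) ^ k) := by
  obtain ⟨k', rfl⟩ : ∃ k'', k = k'' + 1 := ⟨k - 1, (Nat.succ_pred_eq_of_pos hk).symm⟩
  refine ⟨1 / 2 ^ (k' + 1 + 4), 16, by positivity, by norm_num, ?_⟩
  intro ε δ hε hδ L M hL hLM Δ hΔ A hA hAsub hAP ϑ hϑ hcount
  by_contra hcon
  push_neg at hcon
  obtain ⟨hc1, hc2⟩ := hcon
  obtain ⟨hε0, hε2⟩ := hε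
  obtain ⟨hδ0, hδ2⟩ := hδ
  set b : ℝ := nint ϑ with hbdef
  have hb0 : 0 ≤ b := abs_nonneg _
  have hMnat : 1 ≤ M := hL.trans hLM
  have hM1 : (1 : ℝ) ≤ (M : ℝ) := by exact_mod_cast hMnat
  have hM0 : (0 : ℝ) < (M : ℝ) := lt_of_lt_of_le one_pos hM1
  have hL1 : (1 : ℝ) ≤ (L : ℝ) := by exact_mod_cast hL
  have hΔ0 : (0 : ℝ) < Δ := lt_of_lt_of_le one_pos hΔ
  simp only [Nat.add_sub_cancel] at hϑ
  have hbpos : 0 < b := lt_of_le_of_lt (by positivity) hc2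
  -- basic reformulations
  have hb' : 16 * Δ * ε < δ * (b * (M : ℝ) ^ (k' + 1)) := by
    rw [div_lt_iff₀ (by positivity)] at hc2
    calc 16 * Δ * ε = δ * (16 * Δ * δ⁻¹ * ε) := by field_simp
      _ < δ * (b * (M : ℝ) ^ (k' + 1)) := mul_lt_mul_of_pos_left hc2 hδ0
  have hϑ' : b * ((L : ℝ) * (M : ℝ) ^ k') ≤ ε := by
    rw [le_div_iff₀ (by positivity)] at hϑ; exact hϑ
  have hL' : 16 * Δ * (L : ℝ) < δ * M := by
    have h1 : (16 * Δ * (L : ℝ)) * (b * (M : ℝ) ^ k') < (δ * M) * (b * (M : ℝ) ^ k') := by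
      calc (16 * Δ * (L : ℝ)) * (b * (M : ℝ) ^ k')
          = 16 * Δ * (b * ((L : ℝ) * (M : ℝ) ^ k')) := by ring
        _ ≤ 16 * Δ * ε := by
            apply mul_le_mul_of_nonneg_left hϑ' (by positivity)
        _ < δ * (b * (M : ℝ) ^ (k' + 1)) := hb'
        _ = (δ * M) * (b * (M : ℝ) ^ k') := by rw [pow_succ]; ring
    exact lt_of_mul_lt_mul_right h1 (by positivity)
  have hbM : 32 * ε < b * (M : ℝ) ^ (k' + 1) := by
    have hQ0 : (0 : ℝ) < b * (M : ℝ) ^ (k' + 1) := by positivity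
    have h1 : (1 : ℝ) * (16 * ε) ≤ Δ * (16 * ε) :=
      mul_le_mul_of_nonneg_right hΔ (by linarith only [hε0])
    have h2 : δ * (b * (M : ℝ) ^ (k' + 1)) < (1 / 2) * (b * (M : ℝ) ^ (k' + 1)) :=
      mul_lt_mul_of_pos_right hδ2 hQ0
    linarith only [hb', h1, h2, hQ0]
  set K : ℝ := (k' : ℝ) + 1 with hK
  have hK1 : (1 : ℝ) ≤ K := by rw [hK]; have := Nat.cast_nonneg (α := ℝ) k'; linarith
  have hK0 : (0 : ℝ) < K := lt_of_lt_of_le one_pos hK1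
  set D : ℝ := 2 * ε / (K * (M : ℝ) ^ k' * b) with hD
  have hD0 : 0 ≤ D := by positivity
  set l : ℕ := ⌊D⌋₊ with hl
  have hlD : (l : ℝ) ≤ D := Nat.floor_le hD0
  have hlM : l + 1 ≤ M := by
    have hDM : D < (M : ℝ) := by
      rw [hD, div_lt_iff₀ (by positivity)]
      have heq : (M : ℝ) * (K * (M : ℝ) ^ k' * b) = K * (b * (M : ℝ) ^ (k' + 1)) := by
        rw [pow_succ]; ring
      rw [heq]
      have hQ0 : (0 : ℝ) < b * (M : ℝ) ^ (k' + 1) := by positivity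
      have h1 : (1 : ℝ) * (b * (M : ℝ) ^ (k' + 1)) ≤ K * (b * (M : ℝ) ^ (k' + 1)) :=
        mul_le_mul_of_nonneg_right hK1 hQ0.le
      linarith only [hbM, h1, hε0]
    have : l < M := (Nat.floor_lt hD0).mpr (by exact_mod_cast hDM)
    omega
  set len : ℕ := max (l + 1) L with hlen
  have hlenM : len ≤ M := max_le hlM hLM
  have hlenL : L ≤ len := le_max_right _ _
  have hllen : l + 1 ≤ len := le_max_left _ _
  have hlen1 : 1 ≤ len := le_trans (by omega) hllen
  set Nmx : ℕ := ⌊(2 * (M : ℝ)) ^ (k' + 1) * b + 1⌋₊ with hNm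
  set f : ℕ → ℕ := fun m => (round ((m : ℝ) ^ (k' + 1) * b)).toNat with hf
  have hcount' : δ * A.card ≤
      ((A.filter (fun m : ℕ => nint ((m : ℝ) ^ (k' + 1) * ϑ) ≤ ε)).card : ℝ) := by
    rw [← card_filter_coe A (fun x : ℝ => nint (x ^ (k' + 1) * ϑ) ≤ ε)]
    exact hcount
  set G : Finset ℕ := A.filter (fun m : ℕ => nint ((m : ℝ) ^ (k' + 1) * ϑ) ≤ ε) with hG
  have hlenub : len ≤ (l + 1) + L := max_le (Nat.le_add_right _ _) (Nat.le_add_left _ _)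
  clear_value K D l len Nmx f G
  -- key per-element facts
  have key : ∀ m ∈ G, M ≤ m ∧ m ≤ 2 * M ∧
      |(m : ℝ) ^ (k' + 1) * b - round ((m : ℝ) ^ (k' + 1) * b)| ≤ ε ∧
      1 ≤ round ((m : ℝ) ^ (k' + 1) * b) ∧
      ((round ((m : ℝ) ^ (k' + 1) * b) : ℝ) ≤ (2 * (M : ℝ)) ^ (k' + 1) * b + 1) := by
    intro m hm
    rw [hG, Finset.mem_filter] at hm
    obtain ⟨hmA, hmnint⟩ := hm
    have hmIcc := hAsub hmA
    rw [Finset.mem_Icc] at hmIcc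
    obtain ⟨hmM, hm2M⟩ := hmIcc
    have hmMR : (M : ℝ) ≤ m := by exact_mod_cast hmM
    have hm2MR : (m : ℝ) ≤ 2 * (M : ℝ) := by
      have : (m : ℝ) ≤ ((2 * M : ℕ) : ℝ) := by exact_mod_cast hm2M
      push_cast at this; linarith
    have hcast : (((m : ℤ) ^ (k' + 1) : ℤ) : ℝ) = (m : ℝ) ^ (k' + 1) := by push_cast; ring
    have habs := aux_nint ((m : ℤ) ^ (k' + 1)) ϑ ε (by rw [hcast]; exact hmnint)
    rw [hcast, ← hbdef] at habs
    have hmb1 : (M : ℝ) ^ (k' + 1) * b ≤ (m : ℝ) ^ (k' + 1) * b :=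
      mul_le_mul_of_nonneg_right (pow_le_pow_left₀ hM0.le hmMR _) hb0
    have hmb2 : (m : ℝ) ^ (k' + 1) * b ≤ (2 * (M : ℝ)) ^ (k' + 1) * b :=
      mul_le_mul_of_nonneg_right (pow_le_pow_left₀ (by positivity) hm2MR _) hb0
    obtain ⟨habs1, habs2⟩ := abs_le.mp habs
    have hr1 : 1 ≤ round ((m : ℝ) ^ (k' + 1) * b) := by
      have h0 : (0 : ℝ) < (round ((m : ℝ) ^ (k' + 1) * b) : ℝ) := by
        linarith only [hbM, hmb1, habs2, hε0]
      have h0' : (0 : ℤ) < round ((m : ℝ) ^ (k' + 1) * b) := by exact_mod_cast h0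
      omega
    refine ⟨hmM, hm2M, habs, hr1, by linarith only [habs1, hmb2, hε2]⟩
  -- fibers land in [1, Nmx]
  have hfmem : ∀ m ∈ G, f m ∈ Finset.Icc 1 Nmx := by
    intro m hm
    obtain ⟨_, _, _, hr1, hr2⟩ := key m hm
    rw [Finset.mem_Icc]
    constructor
    · simp only [hf]
      omega
    · simp only [hf]
      rw [hNm]
      apply Nat.le_floor
      have hcast : (((round ((m : ℝ) ^ (k' + 1) * b)).toNat : ℕ) : ℝ)
          = ((round ((m : ℝ) ^ (k' + 1) * b) : ℤ) : ℝ) := by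
        exact_mod_cast congrArg (Int.cast : ℤ → ℝ)
          (Int.toNat_of_nonneg (le_trans (by norm_num) hr1))
      rw [hcast]; exact hr2
  have hGsum : G.card = ∑ n ∈ Finset.Icc 1 Nmx, (G.filter fun m => f m = n).card :=
    Finset.card_eq_sum_card_fiberwise hfmem
  -- per-fiber bound
  have hfiber : ∀ n ∈ Finset.Icc 1 Nmx,
      ((G.filter fun m => f m = n).card : ℝ) ≤ Δ * A.card * len / M := by
    intro n hn
    set T := G.filter fun m => f m = n with hT
    clear_value T
    rcases T.eq_empty_or_nonempty with hTe | hTne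
    · rw [hTe]
      simp only [Finset.card_empty, Nat.cast_zero]
      positivity
    · set g := T.min' hTne with hg
      have hgT : g ∈ T := by rw [hg]; exact T.min'_mem hTne
      have hgle : ∀ m ∈ T, g ≤ m := by
        intro m hm; rw [hg]; exact T.min'_le m hm
      clear_value g
      have hgG : g ∈ G := by
        have h := hgT; rw [hT, Finset.mem_filter] at h; exact h.1
      obtain ⟨hgM, hg2M, hgabs, hgr1, _⟩ := key g hgG
      have hgMR : (M : ℝ) ≤ (g : ℝ) := by exact_mod_cast hgM
      have hmono : ∀ m ∈ T, g ≤ m ∧ m ≤ g + l ∧ m ≤ 2 * M ∧ m ∈ A := by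
        intro m hmT
        have hmG : m ∈ G := by
          have h := hmT; rw [hT, Finset.mem_filter] at h; exact h.1
        have hmA : m ∈ A := by
          have h := hmG; rw [hG, Finset.mem_filter] at h; exact h.1
        obtain ⟨hmM, hm2M, hmabs, hmr1, _⟩ := key m hmG
        have hgm : g ≤ m := hgle m hmT
        have hgmR : (g : ℝ) ≤ (m : ℝ) := by exact_mod_cast hgm
        refine ⟨hgm, ?_, hm2M, hmA⟩
        have hfm : f m = n := by
          have h := hmT; rw [hT, Finset.mem_filter] at h; exact h.2
        have hfg : f g = n := by
          have h := hgT; rw [hT, Finset.mem_filter] at h; exact h.2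
        have hround : round ((m : ℝ) ^ (k' + 1) * b) = round ((g : ℝ) ^ (k' + 1) * b) := by
          rw [hf] at hfm hfg
          simp only at hfm hfg
          omega
        obtain ⟨hm1, hm2⟩ := abs_le.mp hmabs
        obtain ⟨hg1, hg2⟩ := abs_le.mp hgabs
        have h2ε : (m : ℝ) ^ (k' + 1) * b - (g : ℝ) ^ (k' + 1) * b ≤ 2 * ε := by
          rw [hround] at hm2; linarith
        have hpow := aux_pow_sub_pow (k' + 1) (M : ℝ) (m : ℝ) (g : ℝ) hM0.le hgMR hgmR
        simp only [Nat.add_sub_cancel] at hpow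
        have hKcast : ((k' + 1 : ℕ) : ℝ) = K := by rw [hK]; push_cast; ring
        rw [hKcast] at hpow
        have hstep : ((m : ℝ) - g) * (K * (M : ℝ) ^ k' * b) ≤ 2 * ε := by
          calc ((m : ℝ) - g) * (K * (M : ℝ) ^ k' * b)
              = (((m : ℝ) - g) * (K * (M : ℝ) ^ k')) * b := by ring
            _ ≤ ((m : ℝ) ^ (k' + 1) - (g : ℝ) ^ (k' + 1)) * b :=
                mul_le_mul_of_nonneg_right hpow hb0
            _ = (m : ℝ) ^ (k' + 1) * b - (g : ℝ) ^ (k' + 1) * b := by ring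
            _ ≤ 2 * ε := h2ε
        have hmgD : ((m : ℝ) - g) ≤ D := by
          rw [hD, le_div_iff₀ (by positivity)]
          exact hstep
        have : ((m - g : ℕ) : ℝ) ≤ D := by
          rw [Nat.cast_sub hgm]; exact hmgD
        have hml : m - g ≤ l := by rw [hl]; exact Nat.le_floor this
        omega
      -- build the covering progression
      set a0 := min g (2 * M + 1 - len) with ha0
      have ha01 : a0 ≤ g := min_le_left _ _
      have ha02 : a0 ≤ 2 * M + 1 - len := min_le_right _ _
      have ha0M : M ≤ a0 := le_min hgM (by omega)
      have ha0cases : a0 = g ∨ a0 = 2 * M + 1 - len := by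
        rcases min_cases g (2 * M + 1 - len) with ⟨h1, _⟩ | ⟨h1, _⟩ <;>
          rw [ha0] <;> [left; right] <;> exact h1
      clear_value a0
      set P := (Finset.range len).image (fun i => a0 + i * 1) with hP
      clear_value P
      have hPsub : P ⊆ Finset.Icc M (2 * M) := by
        intro x hx
        rw [hP, Finset.mem_image] at hx
        obtain ⟨i, hi, rfl⟩ := hx
        rw [Finset.mem_range] at hi
        rw [Finset.mem_Icc]
        omega
      have hTsub : T ⊆ A ∩ P := by
        intro m hmT
        obtain ⟨hgm, hmgl, hm2M', hmA⟩ := hmono m hmT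
        rw [Finset.mem_inter]
        refine ⟨hmA, ?_⟩
        rw [hP, Finset.mem_image]
        refine ⟨m - a0, Finset.mem_range.mpr ?_, by omega⟩
        rcases ha0cases with h1 | h1 <;> omega
      have hap := hAP a0 1 len le_rfl hlenL (by rw [← hP]; exact hPsub)
      rw [← hP] at hap
      have hPcard : P.card ≤ len := by
        rw [hP]
        exact le_trans Finset.card_image_le (le_of_eq (Finset.card_range len))
      calc ((T.card : ℕ) : ℝ) ≤ ((A ∩ P).card : ℝ) := by
            exact_mod_cast Finset.card_le_card hTsub
        _ ≤ Δ * A.card * P.card / M := hap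
        _ ≤ Δ * A.card * len / M := by
            refine (div_le_div_iff_of_pos_right hM0).mpr ?_
            refine mul_le_mul_of_nonneg_left ?_ (by positivity)
            exact_mod_cast hPcard
  -- total count
  have htotal : δ * A.card ≤ (Nmx : ℝ) * (Δ * A.card * len / M) := by
    calc δ * A.card ≤ (G.card : ℝ) := hcount'
      _ = ∑ n ∈ Finset.Icc 1 Nmx, ((G.filter fun m => f m = n).card : ℝ) := by
          rw [hGsum]; push_cast; ring
      _ ≤ ∑ _n ∈ Finset.Icc 1 Nmx, (Δ * A.card * len / M) := Finset.sum_le_sum hfiber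
      _ = ((Finset.Icc 1 Nmx).card : ℝ) * (Δ * A.card * len / M) := by
          rw [Finset.sum_const, nsmul_eq_mul]
      _ = (Nmx : ℝ) * (Δ * A.card * len / M) := by
          rw [Nat.card_Icc, Nat.add_sub_cancel]
  have hAc : (0 : ℝ) < (A.card : ℝ) := by
    have := Finset.card_pos.mpr hA
    exact_mod_cast this
  have hmain : δ * M ≤ (Nmx : ℝ) * Δ * len := by
    have h1 : (δ * M) * A.card ≤ ((Nmx : ℝ) * Δ * len) * A.card := by
      calc (δ * M) * A.card = (δ * A.card) * M := by ring
        _ ≤ ((Nmx : ℝ) * (Δ * A.card * len / M)) * M :=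
            mul_le_mul_of_nonneg_right htotal hM0.le
        _ = ((Nmx : ℝ) * Δ * len) * A.card := by
            have hdm : (Δ * (A.card : ℝ) * len / M) * M = Δ * A.card * len :=
              div_mul_cancel₀ _ (ne_of_gt hM0)
            calc ((Nmx : ℝ) * (Δ * A.card * len / M)) * M
                = (Nmx : ℝ) * ((Δ * A.card * len / M) * M) := by ring
              _ = (Nmx : ℝ) * (Δ * A.card * len) := by rw [hdm]
              _ = ((Nmx : ℝ) * Δ * len) * A.card := by ring
    exact le_of_mul_le_mul_right h1 hAc
  -- final numeric contradiction
  set X : ℝ := 2 ^ (k' + 1) with hX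
  have hX1 : (1 : ℝ) ≤ X := by rw [hX]; exact one_le_pow₀ (by norm_num)
  have hX0 : (0 : ℝ) < X := lt_of_lt_of_le one_pos hX1
  set Mk : ℝ := (M : ℝ) ^ (k' + 1) with hMk
  have hMk0 : (0 : ℝ) < Mk := by rw [hMk]; positivity
  have hMkeq : Mk = (M : ℝ) ^ k' * M := by rw [hMk, pow_succ]
  have hNb : (Nmx : ℝ) ≤ X * Mk * b + 1 := by
    rw [hNm]
    calc ((⌊(2 * (M : ℝ)) ^ (k' + 1) * b + 1⌋₊ : ℕ) : ℝ)
        ≤ (2 * (M : ℝ)) ^ (k' + 1) * b + 1 := Nat.floor_le (by positivity)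
      _ = X * Mk * b + 1 := by rw [hX, hMk, mul_pow]
  have hlenb : (len : ℝ) ≤ D + 1 + L := by
    have h1 : len ≤ (l + 1) + L := hlenub
    calc (len : ℝ) ≤ ((l : ℝ) + 1) + L := by exact_mod_cast h1
      _ ≤ D + 1 + L := by linarith only [hlD]
  have hstep : δ * M ≤ (X * Mk * b + 1) * Δ * (D + 1 + L) := by
    calc δ * M ≤ (Nmx : ℝ) * Δ * len := hmain
      _ ≤ (X * Mk * b + 1) * Δ * (D + 1 + L) := by
          apply mul_le_mul (mul_le_mul_of_nonneg_right hNb hΔ0.le) hlenb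
            (Nat.cast_nonneg _) (by positivity)
  -- key sub-bound used twice
  have hXe : 16 * X * Δ * ε < δ := by
    have hp : (0 : ℝ) < (2 : ℝ) ^ (k' + 1 + 4) := by positivity
    have h2 : (2 : ℝ) ^ (k' + 1 + 4) = X * 16 := by rw [hX, pow_add]; norm_num
    calc 16 * X * Δ * ε = 2 ^ (k' + 1 + 4) * (Δ * ε) := by rw [h2]; ring
      _ < 2 ^ (k' + 1 + 4) * (Δ * (1 / 2 ^ (k' + 1 + 4) * δ / Δ)) := by
          apply mul_lt_mul_of_pos_left _ hp
          exact mul_lt_mul_of_pos_left hc1 hΔ0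
      _ = δ := by field_simp
  have hXeM : 16 * X * Δ * ε * M ≤ δ * M :=
    mul_le_mul_of_nonneg_right hXe.le hM0.le
  -- bound the four expanded terms
  have hg1 : Δ * (X * Mk * b * D) ≤ δ * M / 8 := by
    have hDval : X * Mk * b * D = 2 * X * ε * M / K := by
      rw [hD, hMkeq]
      field_simp
    calc Δ * (X * Mk * b * D) = 2 * X * Δ * ε * M / K := by rw [hDval]; ring
      _ ≤ 2 * X * Δ * ε * M := div_le_self (by positivity) hK1
      _ ≤ δ * M / 8 := by linarith only [hXeM]
  have hBL : Mk * b ≤ ε * M / L := by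
    rw [le_div_iff₀ (by positivity : (0 : ℝ) < (L : ℝ))]
    calc Mk * b * L = (b * ((L : ℝ) * (M : ℝ) ^ k')) * M := by rw [hMkeq]; ring
      _ ≤ ε * M := mul_le_mul_of_nonneg_right hϑ' hM0.le
  have h1L : (1 : ℝ) + L ≤ 2 * L := by linarith only [hL1]
  have hg2 : Δ * (X * Mk * b * (1 + L)) ≤ δ * M / 8 := by
    have h2 : X * Mk * b * (1 + L) ≤ X * (ε * M / L) * (2 * L) := by
      calc X * Mk * b * (1 + L) = (X * (Mk * b)) * (1 + L) := by ring
        _ ≤ (X * (ε * M / L)) * (2 * L) := by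
            apply mul_le_mul (mul_le_mul_of_nonneg_left hBL hX0.le) h1L
              (by positivity) (by positivity)
    have h3 : X * (ε * M / L) * (2 * L) = 2 * X * ε * M := by
      field_simp
    rw [h3] at h2
    calc Δ * (X * Mk * b * (1 + L)) ≤ Δ * (2 * X * ε * M) :=
          mul_le_mul_of_nonneg_left h2 hΔ0.le
      _ = 16 * X * Δ * ε * M / 8 := by ring
      _ ≤ δ * M / 8 := by linarith only [hXeM]
  have hg3 : Δ * D ≤ δ * M / 8 := by
    rw [hD]
    rw [mul_div_assoc']
    rw [div_le_div_iff₀ (by positivity) (by norm_num : (0 : ℝ) < 8)]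
    have hKB : δ * (b * Mk) ≤ δ * M * (K * (M : ℝ) ^ k' * b) := by
      calc δ * (b * Mk) = 1 * (δ * ((M : ℝ) ^ k' * M * b)) := by rw [hMkeq]; ring
        _ ≤ K * (δ * ((M : ℝ) ^ k' * M * b)) :=
            mul_le_mul_of_nonneg_right hK1 (by positivity)
        _ = δ * M * (K * (M : ℝ) ^ k' * b) := by ring
    calc Δ * (2 * ε) * 8 = 16 * Δ * ε := by ring
      _ ≤ δ * (b * Mk) := by rw [hMk]; linarith only [hb']
      _ ≤ δ * M * (K * (M : ℝ) ^ k' * b) := hKB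
  have hg4 : Δ * (1 + L) ≤ δ * M / 8 := by
    calc Δ * (1 + L) ≤ Δ * (2 * L) := mul_le_mul_of_nonneg_left h1L hΔ0.le
      _ = 16 * Δ * L / 8 := by ring
      _ ≤ δ * M / 8 := by linarith only [hL']
  have hexp : (X * Mk * b + 1) * Δ * (D + 1 + L)
      = Δ * (X * Mk * b * D) + Δ * (X * Mk * b * (1 + L)) + Δ * D + Δ * (1 + L) := by
    ring
  rw [hexp] at hstep
  linarith only [hstep, hg1, hg2, hg3, hg4, mul_pos hδ0 hM0]
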